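/- arXiv:2605.28385 — 3 statements merged into one kernel-verified Lean document; each statement's English description precedes it below -/
import Mathlib

section
/- Let E be a real inner product space, s ∈ E with s ≠ 0, K : E →ₗ[ℝ] E with ⟪s, K s⟫ ≥ 0, and w̃ ∈ E. Let η, η₀ be real numbers with η₀ > 0 and η ≥ ‖w̃‖ + η₀. Then ⟪s, (−η) • (‖s‖⁻¹ • s) − K s + w̃⟫ ≤ −η₀ · ‖s‖. -/
open scoped RealInnerProductSpace

/-- Lyapunov decrease for the closed-loop sliding dynamics
`ṡ = −η·sgn(s) − Ks + w̃` with `η ≥ ‖w̃‖ + η₀`. -/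
theorem sliding_lyapunov_decrease {E : Type*} [NormedAddCommGroup E]
    [InnerProductSpace ℝ E] (s : E) (hs : s ≠ 0)
    (K : E →ₗ[ℝ] E) (hK : 0 ≤ ⟪s, K s⟫)
    (w : E) (η η₀ : ℝ) (hη₀ : 0 < η₀) (hη : ‖w‖ + η₀ ≤ η) :
    ⟪s, (-η) • (‖s‖⁻¹ • s) - K s + w⟫ ≤ -η₀ * ‖s‖ := by
  have hns : (0:ℝ) < ‖s‖ := norm_pos_iff.mpr hs
  have h1 : ⟪s, (-η) • (‖s‖⁻¹ • s) - K s + w⟫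
      = -η * (‖s‖⁻¹ * ⟪s, s⟫) - ⟪s, K s⟫ + ⟪s, w⟫ := by
    rw [inner_add_right, inner_sub_right, real_inner_smul_right, real_inner_smul_right]
    
  have h2 : ⟪s, s⟫ = ‖s‖ * ‖s‖ := real_inner_self_eq_norm_mul_norm s
  have h3 : ⟪s, w⟫ ≤ ‖s‖ * ‖w‖ := real_inner_le_norm s w
  rw [h1, h2]
  have : ‖s‖⁻¹ * (‖s‖ * ‖s‖) = ‖s‖ := by field_simp
  rw [this]
  nlinarith [norm_nonneg w]
end

section
/- Let η₀ > 0, T > 0, and let V : ℝ → ℝ be a function such that V t > 0 for all t ∈ [0, T] and, for every t ∈ [0, T], V has derivative V' t at t (HasDerivAt) with V' t ≤ −η₀ · Real.sqrt (2 · V t). Then Real.sqrt (V T) ≤ Real.sqrt (V 0) − (η₀ / Real.sqrt 2) · T; in particular T < Real.sqrt (2 · V 0) / η₀. -/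
/-!
Along a trajectory with `V > 0`, the chain rule gives `(√V)' = V' / (2√V) ≤ -η₀ √(2V) / (2√V) = -η₀/√2`,
so `√V` decreases at least linearly with slope `η₀/√2`. Since `√(V T) > 0`, the linear bound forces
`(η₀/√2) T < √(V 0)`, i.e. `T < √(2 V 0)/η₀`.
-/

open Set

theorem sub_le_mul_sub_of_hasDerivAt_le {f f' : ℝ → ℝ} {a b C : ℝ} (hab : a ≤ b)
    (hf : ∀ t ∈ Icc a b, HasDerivAt f (f' t) t) (hf' : ∀ t ∈ Icc a b, f' t ≤ C) :
    f b - f a ≤ C * (b - a) := by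
  refine (convex_Icc a b).image_sub_le_mul_sub_of_deriv_le
    (fun t ht => (hf t ht).continuousAt.continuousWithinAt) ?_ ?_ a (left_mem_Icc.2 hab) b
    (right_mem_Icc.2 hab) hab
  · intro t ht
    rw [interior_Icc] at ht
    exact (hf t (Ioo_subset_Icc_self ht)).differentiableAt.differentiableWithinAt
  · intro t ht
    rw [interior_Icc] at ht
    rw [(hf t (Ioo_subset_Icc_self ht)).deriv]
    exact hf' t (Ioo_subset_Icc_self ht)

theorem div_two_mul_sqrt_le_of_le_neg_mul_sqrt_two_mul {η v v' : ℝ} (hv : 0 < v)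
    (hv' : v' ≤ -η * √(2 * v)) : v' / (2 * √v) ≤ -(η / √2) := by
  have hsqrt_v : 0 < √v := Real.sqrt_pos.2 hv
  have hsqrt_two : √2 ^ 2 = 2 := Real.sq_sqrt zero_le_two
  calc v' / (2 * √v) ≤ -η * √(2 * v) / (2 * √v) := by gcongr
    _ = -(η / √2) := by
      rw [Real.sqrt_mul zero_le_two]
      field_simp
      linear_combination -η * hsqrt_two

theorem sqrt_le_sqrt_sub_of_hasDerivAt_le_neg_mul_sqrt_two_mul {V V' : ℝ → ℝ} {η a b : ℝ}
    (hab : a ≤ b) (hV : ∀ t ∈ Icc a b, 0 < V t)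
    (hV' : ∀ t ∈ Icc a b, HasDerivAt V (V' t) t)
    (hbound : ∀ t ∈ Icc a b, V' t ≤ -η * √(2 * V t)) :
    √(V b) ≤ √(V a) - η / √2 * (b - a) := by
  have key := sub_le_mul_sub_of_hasDerivAt_le hab
    (fun t ht => (hV' t ht).sqrt (hV t ht).ne')
    (fun t ht => div_two_mul_sqrt_le_of_le_neg_mul_sqrt_two_mul (hV t ht) (hbound t ht))
  linarith

/-- Finite-time reaching estimate: if `V > 0` on `[0, T]` and
`V' ≤ −η₀ √(2V)` there, then `√(V T) ≤ √(V 0) − (η₀/√2)·T`; in particular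
`T < √(2 V 0)/η₀`. -/
theorem finite_time_reaching (η₀ T : ℝ) (hη₀ : 0 < η₀) (hT : 0 < T)
    (V V' : ℝ → ℝ)
    (hVpos : ∀ t ∈ Set.Icc (0 : ℝ) T, 0 < V t)
    (hderiv : ∀ t ∈ Set.Icc (0 : ℝ) T, HasDerivAt V (V' t) t)
    (hbound : ∀ t ∈ Set.Icc (0 : ℝ) T, V' t ≤ -η₀ * Real.sqrt (2 * V t)) :
    Real.sqrt (V T) ≤ Real.sqrt (V 0) - η₀ / Real.sqrt 2 * T ∧
    T < Real.sqrt (2 * V 0) / η₀ := by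
  have decay : √(V T) ≤ √(V 0) - η₀ / √2 * T := by
    simpa using sqrt_le_sqrt_sub_of_hasDerivAt_le_neg_mul_sqrt_two_mul hT.le hVpos hderiv hbound
  have hVT : 0 < √(V T) := Real.sqrt_pos.2 (hVpos T (right_mem_Icc.2 hT.le))
  have hrate : 0 < η₀ / √2 := by positivity
  refine ⟨decay, ?_⟩
  have hreach : √(2 * V 0) / η₀ = √(V 0) / (η₀ / √2) := by
    rw [Real.sqrt_mul zero_le_two]
    field_simp
  rw [hreach, lt_div_iff₀' hrate]
  linarith
end

section
/- Let N : ℕ, let A, P : Matrix (Fin N) (Fin N) ℝ with P symmetric (P = Pᵀ). Let ρ > 0, μ ∈ (0, ρ), ℓ ≥ 0, w_max ≥ 0, μ* ≥ 1, β > 0, and set θ := μ*·(2ρ+μ) + (ρ−μ) and Γ := μ*²·w_max²/(ρ−μ) + μ*·ℓ²/μ. Assume: (a) P − 1 is positive semidefinite and μ*·1 − P is positive semidefinite; (b) the LMI holds: −(Aᵀ*P + P*A) − θ·1 − β·P is positive semidefinite; (c) g : (Fin N → ℝ) → ℝ → (Fin N → ℝ) satisfies ‖g y t‖ ≤ ρ·‖y‖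 + ℓ for all y, t (Euclidean norm); (d) w : ℝ → (Fin N → ℝ) satisfies ‖w t‖ ≤ w_max for all t; (e) x : ℝ → (Fin N → ℝ) satisfies, for every t ≥ 0, HasDerivAt x (A *ᵥ x t + g (x t) t + w t) t. Then for every t ≥ 0, the Lyapunov function V(y) := y ⬝ᵥ (P *ᵥ y) satisfies V(x t) ≤ Real.exp (−β·t) · V(x 0) + Γ/β. -/
/-!
Along the trajectory, `V' = xᵀ(AᵀP + PA)x + 2xᵀPg + 2xᵀPw`. Since `0 ≤ P ≤ μ*`, each cross term
is at most `2μ*‖x‖‖·‖` (Cauchy–Schwarz for the form of `P`), and Young's inequality with weight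
`μ` for `g` and `ρ - μ` for `w` bounds their sum by `(μ*(2ρ + μ) + (ρ - μ))‖x‖² + Γ`. The LMI
cancels this `‖x‖²` term exactly, leaving `V' ≤ -βV + Γ`, and Grönwall's inequality concludes.
-/

open Matrix

/-- Euclidean norm on `Fin N → ℝ`. -/
noncomputable def eucNorm {N : ℕ} (y : Fin N → ℝ) : ℝ :=
  Real.sqrt (∑ i, y i ^ 2)

open Real

theorem le_exp_mul_add_div_of_hasDerivAt_le {V V' : ℝ → ℝ} {β Γ t : ℝ}
    (hβ : 0 < β) (hΓ : 0 ≤ Γ) (hV : ∀ s, 0 ≤ s → HasDerivAt V (V' s) s)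
    (hV' : ∀ s, 0 ≤ s → V' s ≤ -β * V s + Γ) (ht : 0 ≤ t) :
    V t ≤ exp (-β * t) * V 0 + Γ / β := by
  have hgronwall := le_gronwallBound_of_liminf_deriv_right_le (δ := V 0) (K := -β) (ε := Γ)
    (fun s hs => (hV s hs.1).continuousAt.continuousWithinAt)
    (fun s hs _ hr => (hV s hs.1).hasDerivWithinAt.liminf_right_slope_le hr) le_rfl
    (fun s hs => hV' s hs.1) t ⟨ht, le_rfl⟩
  rw [sub_zero, gronwallBound_of_K_ne_0 (neg_ne_zero.2 hβ.ne'), div_neg] at hgronwall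
  have : 0 ≤ Γ / β * exp (-β * t) := by positivity
  linarith

theorem two_mul_mul_le_mul_sq_add_sq_div {ε : ℝ} (hε : 0 < ε) (a b : ℝ) :
    2 * a * b ≤ ε * a ^ 2 + b ^ 2 / ε := by
  have h : 0 ≤ (ε * a - b) ^ 2 / ε := by positivity
  have e : (ε * a - b) ^ 2 / ε = ε * a ^ 2 + b ^ 2 / ε - 2 * a * b := by
    field_simp; ring
  linarith

section

variable {n : Type*} [Fintype n]

theorem HasDerivAt.dotProduct {u v : ℝ → n → ℝ} {u' v' : n → ℝ} {t : ℝ}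
    (hu : HasDerivAt u u' t) (hv : HasDerivAt v v' t) :
    HasDerivAt (fun s => u s ⬝ᵥ v s) (u' ⬝ᵥ v t + u t ⬝ᵥ v') t := by
  simp only [_root_.dotProduct, ← Finset.sum_add_distrib]
  exact HasDerivAt.fun_sum fun i _ => (hasDerivAt_pi.1 hu i).mul (hasDerivAt_pi.1 hv i)

theorem HasDerivAt.mulVec (M : Matrix n n ℝ) {u : ℝ → n → ℝ} {u' : n → ℝ} {t : ℝ}
    (hu : HasDerivAt u u' t) : HasDerivAt (fun s => M *ᵥ u s) (M *ᵥ u') t :=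
  (Matrix.mulVecLin M).toContinuousLinearMap.hasFDerivAt.comp_hasDerivAt t hu

theorem Matrix.PosSemidef.dotProduct_mulVec_le {M M' : Matrix n n ℝ} (h : (M - M').PosSemidef)
    (y : n → ℝ) : y ⬝ᵥ (M' *ᵥ y) ≤ y ⬝ᵥ (M *ᵥ y) := by
  have := h.dotProduct_mulVec_nonneg y
  simp only [star_trivial, sub_mulVec, dotProduct_sub] at this
  linarith

theorem Matrix.PosSemidef.sq_dotProduct_mulVec_add_le {P : Matrix n n ℝ} (hP : P.PosSemidef)
    (y v : n → ℝ) :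
    (y ⬝ᵥ (P *ᵥ v) + v ⬝ᵥ (P *ᵥ y)) ^ 2 ≤ 4 * (y ⬝ᵥ (P *ᵥ y)) * (v ⬝ᵥ (P *ᵥ v)) := by
  have hdiscrim := discrim_le_zero (a := y ⬝ᵥ (P *ᵥ y)) (b := -(y ⬝ᵥ (P *ᵥ v) + v ⬝ᵥ (P *ᵥ y)))
    (c := v ⬝ᵥ (P *ᵥ v)) fun r => by
      have := hP.dotProduct_mulVec_nonneg (r • y - v)
      simp only [star_trivial, mulVec_sub, mulVec_smul, dotProduct_sub, sub_dotProduct,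
        dotProduct_smul, smul_dotProduct, smul_eq_mul] at this
      linarith
  rw [discrim] at hdiscrim
  linarith

theorem dotProduct_transpose_mul_add_mul_mulVec (A P : Matrix n n ℝ) (y : n → ℝ) :
    (A *ᵥ y) ⬝ᵥ (P *ᵥ y) + y ⬝ᵥ (P *ᵥ (A *ᵥ y)) = y ⬝ᵥ ((Aᵀ * P + P * A) *ᵥ y) := by
  rw [add_mulVec, dotProduct_add, ← mulVec_mulVec, ← mulVec_mulVec, dotProduct_mulVec y Aᵀ,
    vecMul_transpose]

end

theorem eucNorm_sq {N : ℕ} (y : Fin N → ℝ) : eucNorm y ^ 2 = y ⬝ᵥ y := by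
  rw [eucNorm, sq_sqrt (Finset.sum_nonneg fun i _ => sq_nonneg _)]
  simp [dotProduct, sq]

theorem eucNorm_nonneg {N : ℕ} (y : Fin N → ℝ) : 0 ≤ eucNorm y := sqrt_nonneg _

theorem dotProduct_mulVec_add_le_mul_eucNorm {N : ℕ} {P : Matrix (Fin N) (Fin N) ℝ} {μs : ℝ}
    (hμs : 0 ≤ μs) (hP : P.PosSemidef)
    (hPupper : (μs • (1 : Matrix (Fin N) (Fin N) ℝ) - P).PosSemidef)
    (y v : Fin N → ℝ) :
    y ⬝ᵥ (P *ᵥ v) + v ⬝ᵥ (P *ᵥ y) ≤ 2 * μs * eucNorm y * eucNorm v := by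
  have hupper (z : Fin N → ℝ) : z ⬝ᵥ (P *ᵥ z) ≤ μs * eucNorm z ^ 2 := by
    simpa [eucNorm_sq, smul_mulVec] using hPupper.dotProduct_mulVec_le z
  have hnonneg (z : Fin N → ℝ) : 0 ≤ z ⬝ᵥ (P *ᵥ z) := by
    simpa using hP.dotProduct_mulVec_nonneg z
  refine le_of_sq_le_sq ?_ (by have := eucNorm_nonneg y; have := eucNorm_nonneg v; positivity)
  calc _ ≤ 4 * (y ⬝ᵥ (P *ᵥ y)) * (v ⬝ᵥ (P *ᵥ v)) := hP.sq_dotProduct_mulVec_add_le y v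
    _ ≤ 4 * (μs * eucNorm y ^ 2) * (μs * eucNorm v ^ 2) := by
      have := hnonneg y
      have := hnonneg v
      gcongr <;> exact hupper _
    _ = (2 * μs * eucNorm y * eucNorm v) ^ 2 := by ring

theorem dotProduct_mulVec_add_le_of_lmi {N : ℕ} {A P : Matrix (Fin N) (Fin N) ℝ}
    {ρ μ ℓ wmax μs β : ℝ} (hμ : 0 < μ) (hμρ : μ < ρ) (hμs : 0 ≤ μs)
    (hP : P.PosSemidef) (hPupper : (μs • (1 : Matrix (Fin N) (Fin N) ℝ) - P).PosSemidef)
    (hLMI : (-(Aᵀ * P + P * A)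
        - (μs * (2 * ρ + μ) + (ρ - μ)) • (1 : Matrix (Fin N) (Fin N) ℝ) - β • P).PosSemidef)
    {y gy wy : Fin N → ℝ} (hgy : eucNorm gy ≤ ρ * eucNorm y + ℓ) (hwy : eucNorm wy ≤ wmax) :
    (A *ᵥ y + gy + wy) ⬝ᵥ (P *ᵥ y) + y ⬝ᵥ (P *ᵥ (A *ᵥ y + gy + wy))
      ≤ -β * (y ⬝ᵥ (P *ᵥ y)) + (μs ^ 2 * wmax ^ 2 / (ρ - μ) + μs * ℓ ^ 2 / μ) := by
  have hy := eucNorm_nonneg y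
  have hexpand : (A *ᵥ y + gy + wy) ⬝ᵥ (P *ᵥ y) + y ⬝ᵥ (P *ᵥ (A *ᵥ y + gy + wy))
      = y ⬝ᵥ ((Aᵀ * P + P * A) *ᵥ y) + (y ⬝ᵥ (P *ᵥ gy) + gy ⬝ᵥ (P *ᵥ y))
        + (y ⬝ᵥ (P *ᵥ wy) + wy ⬝ᵥ (P *ᵥ y)) := by
    rw [← dotProduct_transpose_mul_add_mul_mulVec]
    simp only [mulVec_add, dotProduct_add, add_dotProduct]
    ring
  have hlinear : β * (y ⬝ᵥ (P *ᵥ y)) ≤ -(y ⬝ᵥ ((Aᵀ * P + P * A) *ᵥ y))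
      - (μs * (2 * ρ + μ) + (ρ - μ)) * eucNorm y ^ 2 := by
    have h := hLMI.dotProduct_mulVec_le y
    simp only [sub_mulVec, neg_mulVec, smul_mulVec, one_mulVec, dotProduct_sub, dotProduct_neg,
      dotProduct_smul, smul_eq_mul, ← eucNorm_sq] at h
    exact h
  have hg : y ⬝ᵥ (P *ᵥ gy) + gy ⬝ᵥ (P *ᵥ y)
      ≤ μs * (2 * ρ + μ) * eucNorm y ^ 2 + μs * ℓ ^ 2 / μ :=
    calc _ ≤ 2 * μs * eucNorm y * eucNorm gy :=
          dotProduct_mulVec_add_le_mul_eucNorm hμs hP hPupper y gy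
      _ ≤ 2 * μs * eucNorm y * (ρ * eucNorm y + ℓ) := by gcongr
      _ = μs * (2 * ρ * eucNorm y ^ 2 + 2 * eucNorm y * ℓ) := by ring
      _ ≤ μs * (2 * ρ * eucNorm y ^ 2 + (μ * eucNorm y ^ 2 + ℓ ^ 2 / μ)) := by
          gcongr; exact two_mul_mul_le_mul_sq_add_sq_div hμ _ _
      _ = _ := by ring
  have hw : y ⬝ᵥ (P *ᵥ wy) + wy ⬝ᵥ (P *ᵥ y)
      ≤ (ρ - μ) * eucNorm y ^ 2 + μs ^ 2 * wmax ^ 2 / (ρ - μ) :=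
    calc _ ≤ 2 * μs * eucNorm y * eucNorm wy :=
          dotProduct_mulVec_add_le_mul_eucNorm hμs hP hPupper y wy
      _ = 2 * eucNorm y * (μs * eucNorm wy) := by ring
      _ ≤ 2 * eucNorm y * (μs * wmax) := by gcongr
      _ ≤ (ρ - μ) * eucNorm y ^ 2 + (μs * wmax) ^ 2 / (ρ - μ) :=
          two_mul_mul_le_mul_sq_add_sq_div (sub_pos.2 hμρ) _ _
      _ = _ := by ring
  linarith

theorem beta_exponential_stability_general (N : ℕ)
    (A P : Matrix (Fin N) (Fin N) ℝ)
    (ρ μ ℓ wmax μs β : ℝ)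
    (hμ : 0 < μ) (hμρ : μ < ρ)
    (hμs : 1 ≤ μs) (hβ : 0 < β)
    (hPlower : (P - 1).PosSemidef)
    (hPupper : (μs • (1 : Matrix (Fin N) (Fin N) ℝ) - P).PosSemidef)
    (hLMI : (-(Aᵀ * P + P * A)
        - (μs * (2 * ρ + μ) + (ρ - μ)) • (1 : Matrix (Fin N) (Fin N) ℝ)
        - β • P).PosSemidef)
    (g : (Fin N → ℝ) → ℝ → (Fin N → ℝ))
    (hg : ∀ (y : Fin N → ℝ) (t : ℝ), eucNorm (g y t) ≤ ρ * eucNorm y + ℓ)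
    (w : ℝ → (Fin N → ℝ))
    (hw' : ∀ t : ℝ, eucNorm (w t) ≤ wmax)
    (x : ℝ → (Fin N → ℝ))
    (hx : ∀ t : ℝ, 0 ≤ t → HasDerivAt x (A *ᵥ x t + g (x t) t + w t) t) :
    ∀ t : ℝ, 0 ≤ t →
      x t ⬝ᵥ (P *ᵥ x t)
        ≤ Real.exp (-β * t) * (x 0 ⬝ᵥ (P *ᵥ x 0))
          + (μs ^ 2 * wmax ^ 2 / (ρ - μ) + μs * ℓ ^ 2 / μ) / β := by
  intro t ht
  have hμs₀ : 0 ≤ μs := zero_le_one.trans hμs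
  have hP : P.PosSemidef := by simpa using hPlower.add PosSemidef.one
  have hΓ : 0 ≤ μs ^ 2 * wmax ^ 2 / (ρ - μ) + μs * ℓ ^ 2 / μ := by
    have := sub_pos.2 hμρ
    positivity
  refine le_exp_mul_add_div_of_hasDerivAt_le hβ hΓ
    (fun s hs => (hx s hs).dotProduct ((hx s hs).mulVec P)) (fun s _ => ?_) ht
  exact dotProduct_mulVec_add_le_of_lmi hμ hμρ hμs₀ hP hPupper hLMI (hg _ _) (hw' _)

/-- β-exponential stability under dissipative perturbations: along
trajectories of `ẋ = Ax + g(x,t) + w(t)`, the Lyapunov function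
`V(y) = yᵀPy` satisfies `V(x t) ≤ e^{−βt} V(x 0) + Γ/β`. -/
theorem beta_exponential_stability (N : ℕ)
    (A P : Matrix (Fin N) (Fin N) ℝ) (hPsym : P = Pᵀ)
    (ρ μ ℓ wmax μs β : ℝ)
    (hρ : 0 < ρ) (hμ : 0 < μ) (hμρ : μ < ρ)
    (hℓ : 0 ≤ ℓ) (hw : 0 ≤ wmax) (hμs : 1 ≤ μs) (hβ : 0 < β)
    (hPlower : (P - 1).PosSemidef)
    (hPupper : (μs • (1 : Matrix (Fin N) (Fin N) ℝ) - P).PosSemidef)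
    (hLMI : (-(Aᵀ * P + P * A)
        - (μs * (2 * ρ + μ) + (ρ - μ)) • (1 : Matrix (Fin N) (Fin N) ℝ)
        - β • P).PosSemidef)
    (g : (Fin N → ℝ) → ℝ → (Fin N → ℝ))
    (hg : ∀ (y : Fin N → ℝ) (t : ℝ), eucNorm (g y t) ≤ ρ * eucNorm y + ℓ)
    (w : ℝ → (Fin N → ℝ))
    (hw' : ∀ t : ℝ, eucNorm (w t) ≤ wmax)
    (x : ℝ → (Fin N → ℝ))
    (hx : ∀ t : ℝ, 0 ≤ t → HasDerivAt x (A *ᵥ x t + g (x t) t + w t) t) :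
    ∀ t : ℝ, 0 ≤ t →
      x t ⬝ᵥ (P *ᵥ x t)
        ≤ Real.exp (-β * t) * (x 0 ⬝ᵥ (P *ᵥ x 0))
          + (μs ^ 2 * wmax ^ 2 / (ρ - μ) + μs * ℓ ^ 2 / μ) / β :=
  beta_exponential_stability_general N A P ρ μ ℓ wmax μs β hμ hμρ hμs hβ hPlower hPupper hLMI g hg w
    hw' x hx
end
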